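/- Let $\mu$ be a finite Borel measure on $\mathbb{C}$ and $a>0$. There exists $b_0>0$ depending only on $a$ such that for every $b\geq b_0$ the following holds: if $x\in\mathbb{C}$, $t>0$ and $N\geq 0$ are such that $\varepsilon_{\mu,a}(x,2^{-j}t) > b\,\mu(B(x,2^{-j}t))/(2^{-j}t)$ for all $0\leq j\leq N$ (i.e. none of the balls $B(x,2^{-j}t)$ is $(h_a,b)$-doubling), then $\frac{\mu(B(x,2^{-j}t))}{2^{-j}t}\leq 2^{-aj/2}\,\varepsilon_{\mu,a}(x,t)$ for $0\leq j\leq N$, and moreover $\sum_{j=0}^{N}\varepsilon_{\mu,a}(x,2^{-j}t)^{2}\leq C\,\varepsilon_{\mu,a}(x,t)^{2}$ with $C$ depending only on $a$ and $b$ (independent of $N$). -/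

import Mathlib

open MeasureTheory Metric Set
open scoped ENNReal

/-- The smoothed density `ε_{μ,a}(x,t) = (1/t) ∫ ψ_a((y-x)/t) dμ(y)`,
where `ψ_a(x) = 1/(|x|^{1+a} + 1)`. -/
noncomputable def epsMu (μ : Measure ℂ) (a : ℝ) (x : ℂ) (t : ℝ) : ℝ :=
  (1 / t) * ∫ y, 1 / (‖(y - x) / (t : ℂ)‖ ^ (1 + a) + 1) ∂μ


noncomputable def psi (a : ℝ) (x : ℂ) (s : ℝ) (y : ℂ) : ℝ :=
  1 / (‖(y - x) / (s : ℂ)‖ ^ (1 + a) + 1)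

lemma psi_denom_pos (a : ℝ) (x : ℂ) (s : ℝ) (y : ℂ) :
    0 < ‖(y - x) / (s : ℂ)‖ ^ (1 + a) + 1 := by
  have := Real.rpow_nonneg (norm_nonneg ((y - x) / (s:ℂ))) (1 + a)
  linarith

lemma psi_pos (a : ℝ) (x : ℂ) (s : ℝ) (y : ℂ) : 0 < psi a x s y :=
  one_div_pos.mpr (psi_denom_pos a x s y)

lemma psi_le_one (a : ℝ) (x : ℂ) (s : ℝ) (y : ℂ) : psi a x s y ≤ 1 := by
  rw [psi]
  rw [div_le_one (psi_denom_pos a x s y)]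
  have := Real.rpow_nonneg (norm_nonneg ((y - x) / (s:ℂ))) (1 + a)
  linarith

lemma psi_cont (a : ℝ) (ha : 0 < a) (x : ℂ) (s : ℝ) : Continuous (psi a x s) := by
  apply Continuous.div continuous_const
  · apply Continuous.add _ continuous_const
    apply Continuous.rpow_const
    · exact (continuous_norm.comp ((continuous_id.sub continuous_const).div_const _))
    · intro y; right; linarith
  · intro y; exact (psi_denom_pos a x s y).ne'

lemma psi_integrable (a : ℝ) (ha : 0 < a) (x : ℂ) (s : ℝ) (μ : Measure ℂ)
    [IsFiniteMeasure μ] : Integrable (psi a x s) μ := by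
  apply Integrable.mono' (integrable_const (1:ℝ))
    ((psi_cont a ha x s).aestronglyMeasurable)
  filter_upwards with y
  rw [Real.norm_of_nonneg (psi_pos a x s y).le]
  exact psi_le_one a x s y

lemma psi_eq (a : ℝ) (x y : ℂ) {s : ℝ} (hs : 0 < s) :
    psi a x s y = 1 / ((‖y - x‖ / s) ^ (1 + a) + 1) := by
  rw [psi, norm_div, Complex.norm_real, Real.norm_of_nonneg hs.le]

lemma psi_le_rpow (a : ℝ) (x y : ℂ) {s : ℝ} (hs : 0 < s) (hr : 0 < ‖y - x‖) :
    psi a x s y ≤ (s / ‖y - x‖) ^ (1 + a) := by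
  set r := ‖y - x‖ with hrdef
  have hpos : 0 < (r / s) ^ (1 + a) := Real.rpow_pos_of_pos (div_pos hr hs) _
  rw [psi_eq a x y hs]
  calc 1 / ((r / s) ^ (1 + a) + 1) ≤ 1 / ((r / s) ^ (1 + a)) := by
        apply one_div_le_one_div_of_le hpos; linarith
    _ = (s / r) ^ (1 + a) := by
        rw [one_div, ← Real.inv_rpow (div_pos hr hs).le, inv_div]

lemma inv_two_pow_rpow (a : ℝ) (m : ℕ) :
    (((2:ℝ) ^ m)⁻¹) ^ (1 + a) = ((2:ℝ) ^ (-(1 + a))) ^ m := by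
  rw [← Real.rpow_natCast (2:ℝ) m, ← Real.rpow_neg (by norm_num : (0:ℝ) ≤ 2),
      ← Real.rpow_natCast ((2:ℝ) ^ (-(1+a))) m,
      ← Real.rpow_mul (by norm_num : (0:ℝ) ≤ 2),
      ← Real.rpow_mul (by norm_num : (0:ℝ) ≤ 2)]
  ring_nf

lemma one_le_A (a : ℝ) (ha : 0 < a) : 1 ≤ (2:ℝ) ^ (1 + a) := by
  have := Real.rpow_le_rpow_of_exponent_le (by norm_num : (1:ℝ) ≤ 2)
    (by linarith : (0:ℝ) ≤ 1 + a)
  rwa [Real.rpow_zero] at this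

lemma A_mul_q (a : ℝ) : (2:ℝ) ^ (1 + a) * (2:ℝ) ^ (-(1 + a)) = 1 := by
  rw [← Real.rpow_add (by norm_num : (0:ℝ) < 2)]
  have h : (1 + a) + (-(1 + a)) = 0 := by ring
  rw [h, Real.rpow_zero]

lemma pointwise (a : ℝ) (ha : 0 < a) (x y : ℂ) {s : ℝ} (hs : 0 < s) (j : ℕ) :
    psi a x s y ≤
      (2:ℝ) ^ (1 + a) *
        ∑ k ∈ Finset.range (j + 1),
          ((2:ℝ) ^ (-(1 + a))) ^ k *
            (closedBall x ((2:ℝ) ^ k * s)).indicator (fun _ => (1:ℝ)) y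
      + 2 * ((2:ℝ) ^ (-(1 + a))) ^ j * psi a x ((2:ℝ) ^ j * s) y := by
  set q : ℝ := (2:ℝ) ^ (-(1 + a)) with hqdef
  have hq0 : 0 < q := Real.rpow_pos_of_pos (by norm_num) _
  have hA0 : (0:ℝ) < (2:ℝ) ^ (1 + a) := Real.rpow_pos_of_pos (by norm_num) _
  have hA1 := one_le_A a ha
  set r := ‖y - x‖ with hrdef
  have hr0 : 0 ≤ r := norm_nonneg _
  have hsumnn : 0 ≤ ∑ k ∈ Finset.range (j + 1),
      q ^ k * (closedBall x ((2:ℝ) ^ k * s)).indicator (fun _ => (1:ℝ)) y := by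
    apply Finset.sum_nonneg
    intro k _
    exact mul_nonneg (pow_nonneg hq0.le k) (Set.indicator_nonneg (fun _ _ => zero_le_one) y)
  by_cases hbig : r ≤ (2:ℝ) ^ j * s
  · -- inside the big ball
    have hP : ∃ k : ℕ, r ≤ (2:ℝ) ^ k * s := ⟨j, hbig⟩
    set k0 := Nat.find hP with hk0def
    have hk0j : k0 ≤ j := Nat.find_min' hP hbig
    have hk0 : r ≤ (2:ℝ) ^ k0 * s := Nat.find_spec hP
    have hmem : y ∈ closedBall x ((2:ℝ) ^ k0 * s) := by
      rw [mem_closedBall, dist_eq_norm]; exact hk0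
    have hstep : psi a x s y ≤ (2:ℝ) ^ (1 + a) * q ^ k0 := by
      rcases eq_or_ne k0 0 with h0 | h0
      · rw [h0, pow_zero, mul_one]
        exact (psi_le_one a x s y).trans hA1
      · obtain ⟨m, hm⟩ : ∃ m, k0 = m + 1 := ⟨k0 - 1, by omega⟩
        have hmin : (2:ℝ) ^ m * s < r := by
          have := Nat.find_min hP (by omega : m < k0)
          exact lt_of_not_ge this
        have hrpos : 0 < r := lt_trans (by positivity) hmin
        have h1 : psi a x s y ≤ (s / r) ^ (1 + a) := psi_le_rpow a x y hs hrpos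
        have h2 : (s / r) ^ (1 + a) ≤ (((2:ℝ) ^ m)⁻¹) ^ (1 + a) := by
          apply Real.rpow_le_rpow (div_nonneg hs.le hr0) _ (by linarith)
          rw [inv_eq_one_div, div_le_div_iff₀ hrpos (by positivity)]
          nlinarith [hmin]
        have h3 : (((2:ℝ) ^ m)⁻¹) ^ (1 + a) = (2:ℝ) ^ (1 + a) * q ^ k0 := by
          rw [inv_two_pow_rpow a m, hqdef, hm, pow_succ', ← mul_assoc, A_mul_q a, one_mul]
        calc psi a x s y ≤ (s / r) ^ (1 + a) := h1
          _ ≤ _ := h2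
          _ = _ := h3
    have hsum_ge : q ^ k0 ≤ ∑ k ∈ Finset.range (j + 1),
        q ^ k * (closedBall x ((2:ℝ) ^ k * s)).indicator (fun _ => (1:ℝ)) y := by
      have hterm : q ^ k0 * (closedBall x ((2:ℝ) ^ k0 * s)).indicator (fun _ => (1:ℝ)) y
          = q ^ k0 := by rw [Set.indicator_of_mem hmem]; ring
      calc q ^ k0 = _ := hterm.symm
        _ ≤ _ := Finset.single_le_sum
            (f := fun k => q ^ k * (closedBall x ((2:ℝ) ^ k * s)).indicator (fun _ => (1:ℝ)) y)
            (fun k _ => mul_nonneg (pow_nonneg hq0.le k)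
              (Set.indicator_nonneg (fun _ _ => zero_le_one) y))
            (Finset.mem_range.mpr (by omega))
    have hsnd : 0 ≤ 2 * q ^ j * psi a x ((2:ℝ) ^ j * s) y := by
      have := psi_pos a x ((2:ℝ)^j * s) y
      positivity
    calc psi a x s y ≤ (2:ℝ) ^ (1 + a) * q ^ k0 := hstep
      _ ≤ (2:ℝ) ^ (1 + a) * ∑ k ∈ Finset.range (j + 1),
            q ^ k * (closedBall x ((2:ℝ) ^ k * s)).indicator (fun _ => (1:ℝ)) y :=
        mul_le_mul_of_nonneg_left hsum_ge hA0.le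
      _ ≤ _ := by linarith
  · -- outside the big ball
    push_neg at hbig
    set T := (2:ℝ) ^ j * s with hTdef
    have hT : 0 < T := by positivity
    have hrpos : 0 < r := lt_trans hT hbig
    have h1 : psi a x s y ≤ (s / r) ^ (1 + a) := psi_le_rpow a x y hs hrpos
    have hsplit : (s / r) ^ (1 + a) = q ^ j * (T / r) ^ (1 + a) := by
      have : s / r = ((2:ℝ) ^ j)⁻¹ * (T / r) := by
        field_simp [hTdef]
        rw [hTdef]; ring
      rw [this, Real.mul_rpow (by positivity) (by positivity), inv_two_pow_rpow a j]
    have hX1 : 1 ≤ (r / T) ^ (1 + a) := by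
      have h := Real.rpow_le_rpow (by norm_num : (0:ℝ) ≤ 1)
        ((one_le_div hT).mpr hbig.le) (by linarith : (0:ℝ) ≤ 1 + a)
      rwa [Real.one_rpow] at h
    have hXpos : 0 < (r / T) ^ (1 + a) := by linarith
    have h2 : (T / r) ^ (1 + a) ≤ 2 * psi a x T y := by
      rw [psi_eq a x y hT]
      have hinv : (T / r) ^ (1 + a) = ((r / T) ^ (1 + a))⁻¹ := by
        rw [← Real.inv_rpow (by positivity), inv_div]
      rw [hinv, mul_one_div, inv_eq_one_div,
        div_le_div_iff₀ hXpos (by linarith)]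
      nlinarith
    have hcalc : psi a x s y ≤ 2 * q ^ j * psi a x T y := by
      calc psi a x s y ≤ (s / r) ^ (1 + a) := h1
        _ = q ^ j * (T / r) ^ (1 + a) := hsplit
        _ ≤ q ^ j * (2 * psi a x T y) :=
          mul_le_mul_of_nonneg_left h2 (pow_nonneg hq0.le j)
        _ = 2 * q ^ j * psi a x T y := by ring
    have : 0 ≤ (2:ℝ) ^ (1 + a) * ∑ k ∈ Finset.range (j + 1),
        q ^ k * (closedBall x ((2:ℝ) ^ k * s)).indicator (fun _ => (1:ℝ)) y :=
      mul_nonneg hA0.le hsumnn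
    linarith

lemma epsMu_eq (μ : Measure ℂ) (a : ℝ) (x : ℂ) (t : ℝ) :
    epsMu μ a x t = (1 / t) * ∫ y, psi a x t y ∂μ := rfl

lemma epsMu_nonneg (μ : Measure ℂ) (a : ℝ) (x : ℂ) {t : ℝ} (ht : 0 ≤ t) :
    0 ≤ epsMu μ a x t := by
  apply mul_nonneg (by positivity)
  exact integral_nonneg fun y => (psi_pos a x t y).le

lemma q1_mul (a : ℝ) (k : ℕ) :
    ((2:ℝ) ^ (-(1 + a))) ^ k * (2:ℝ) ^ k = ((2:ℝ) ^ (-a)) ^ k := by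
  rw [← mul_pow]
  congr 1
  have h2 : (2:ℝ) = (2:ℝ) ^ (1:ℝ) := (Real.rpow_one 2).symm
  nth_rewrite 2 [h2]
  rw [← Real.rpow_add (by norm_num : (0:ℝ) < 2)]
  congr 1; ring

lemma two_le_A (a : ℝ) (ha : 0 < a) : (2:ℝ) ≤ (2:ℝ) ^ (1 + a) := by
  have := Real.rpow_le_rpow_of_exponent_le (by norm_num : (1:ℝ) ≤ 2)
    (by linarith : (1:ℝ) ≤ 1 + a)
  rwa [Real.rpow_one] at this

lemma key (a : ℝ) (ha : 0 < a) (μ : Measure ℂ) [IsFiniteMeasure μ] (x : ℂ)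
    {s : ℝ} (hs : 0 < s) (j : ℕ) :
    epsMu μ a x s ≤
      (2:ℝ) ^ (1 + a) * ∑ k ∈ Finset.range (j + 1),
          ((2:ℝ) ^ (-a)) ^ k *
            ((μ (closedBall x ((2:ℝ) ^ k * s))).toReal / ((2:ℝ) ^ k * s))
      + (2:ℝ) ^ (1 + a) * ((2:ℝ) ^ (-a)) ^ j * epsMu μ a x ((2:ℝ) ^ j * s) := by
  set q1 : ℝ := (2:ℝ) ^ (-(1 + a)) with hq1def
  set A : ℝ := (2:ℝ) ^ (1 + a) with hAdef
  have hq10 : 0 < q1 := Real.rpow_pos_of_pos (by norm_num) _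
  have hA0 : 0 < A := Real.rpow_pos_of_pos (by norm_num) _
  have hT : 0 < (2:ℝ) ^ j * s := by positivity
  set G : ℂ → ℝ := fun y => ∑ k ∈ Finset.range (j + 1),
      q1 ^ k * (closedBall x ((2:ℝ) ^ k * s)).indicator (fun _ => (1:ℝ)) y with hGdef
  have hGint : Integrable G μ := by
    apply integrable_finset_sum
    intro k _
    exact ((integrable_const (1:ℝ)).indicator measurableSet_closedBall).const_mul _
  have hPint : Integrable (psi a x ((2:ℝ) ^ j * s)) μ := psi_integrable a ha x _ μ
  set F : ℂ → ℝ := fun y => A * G y + 2 * q1 ^ j * psi a x ((2:ℝ) ^ j * s) y with hFdef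
  have hFint : Integrable F μ := (hGint.const_mul A).add (hPint.const_mul _)
  have hIle : ∫ y, psi a x s y ∂μ ≤ ∫ y, F y ∂μ := by
    apply integral_mono (psi_integrable a ha x s μ) hFint
    intro y
    exact pointwise a ha x y hs j
  have hIG : ∫ y, G y ∂μ = ∑ k ∈ Finset.range (j + 1),
      q1 ^ k * (μ (closedBall x ((2:ℝ) ^ k * s))).toReal := by
    rw [hGdef]
    rw [integral_finset_sum _ (fun k _ =>
      ((integrable_const (1:ℝ)).indicator measurableSet_closedBall).const_mul _)]
    apply Finset.sum_congr rfl
    intro k _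
    rw [integral_const_mul, integral_indicator_const _ measurableSet_closedBall]
    simp [smul_eq_mul, Measure.real]
  have hIF : ∫ y, F y ∂μ = A * ∑ k ∈ Finset.range (j + 1),
      q1 ^ k * (μ (closedBall x ((2:ℝ) ^ k * s))).toReal
      + 2 * q1 ^ j * ∫ y, psi a x ((2:ℝ) ^ j * s) y ∂μ := by
    rw [hFdef]
    rw [integral_add (hGint.const_mul A) (hPint.const_mul _), integral_const_mul,
      integral_const_mul, hIG]
  have hIT0 : 0 ≤ ∫ y, psi a x ((2:ℝ) ^ j * s) y ∂μ :=
    integral_nonneg fun y => (psi_pos a x _ y).le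
  have e1 : (1 / s) * (A * ∑ k ∈ Finset.range (j + 1),
        q1 ^ k * (μ (closedBall x ((2:ℝ) ^ k * s))).toReal)
      = A * ∑ k ∈ Finset.range (j + 1),
          ((2:ℝ) ^ (-a)) ^ k *
            ((μ (closedBall x ((2:ℝ) ^ k * s))).toReal / ((2:ℝ) ^ k * s)) := by
    simp only [Finset.mul_sum]
    apply Finset.sum_congr rfl
    intro k _
    rw [← q1_mul a k]
    have h2k : ((2:ℝ) ^ k) ≠ 0 := by positivity
    set QQ := q1 ^ k with hQQ
    field_simp
  have e2 : (1 / s) * (2 * q1 ^ j * ∫ y, psi a x ((2:ℝ) ^ j * s) y ∂μ)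
      ≤ A * ((2:ℝ) ^ (-a)) ^ j * epsMu μ a x ((2:ℝ) ^ j * s) := by
    rw [epsMu_eq]
    rw [← q1_mul a j]
    have h2j : ((2:ℝ) ^ j) ≠ 0 := by positivity
    set QQ := q1 ^ j with hQQ
    have h2A : (2:ℝ) ≤ A := two_le_A a ha
    have hfac : (1 / s) * (2 * q1 ^ j * ∫ y, psi a x ((2:ℝ) ^ j * s) y ∂μ)
        = 2 * ((q1 ^ j * (2:ℝ) ^ j) *
          ((1 / ((2:ℝ) ^ j * s)) * ∫ y, psi a x ((2:ℝ) ^ j * s) y ∂μ)) := by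
      field_simp
    rw [hfac]
    have hrest : 0 ≤ (q1 ^ j * (2:ℝ) ^ j) *
        ((1 / ((2:ℝ) ^ j * s)) * ∫ y, psi a x ((2:ℝ) ^ j * s) y ∂μ) := by
      apply mul_nonneg (by positivity)
      exact mul_nonneg (by positivity) hIT0
    calc 2 * ((q1 ^ j * (2:ℝ) ^ j) * _) ≤ A * ((q1 ^ j * (2:ℝ) ^ j) * _) :=
          mul_le_mul_of_nonneg_right h2A hrest
      _ = A * (q1 ^ j * (2:ℝ) ^ j) * _ := by ring
  calc epsMu μ a x s = (1 / s) * ∫ y, psi a x s y ∂μ := rfl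
    _ ≤ (1 / s) * ∫ y, F y ∂μ := by
        apply mul_le_mul_of_nonneg_left hIle (by positivity)
    _ = (1 / s) * (A * ∑ k ∈ Finset.range (j + 1),
          q1 ^ k * (μ (closedBall x ((2:ℝ) ^ k * s))).toReal)
        + (1 / s) * (2 * q1 ^ j * ∫ y, psi a x ((2:ℝ) ^ j * s) y ∂μ) := by
        rw [hIF]; ring
    _ ≤ _ := by
        rw [e1]
        exact add_le_add_right e2 _

lemma geo_sum_le (r : ℝ) (h0 : 0 ≤ r) (h1 : r < 1) (n : ℕ) :
    ∑ m ∈ Finset.range n, r ^ m ≤ 1 / (1 - r) := by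
  have h : 0 < 1 - r := by linarith
  have hg := geom_sum_mul r n
  rw [le_div_iff₀ h]
  nlinarith [pow_nonneg h0 n]

lemma sum_reflect_pow (r : ℝ) (h0 : 0 ≤ r) (h1 : r < 1) (j : ℕ) :
    ∑ i ∈ Finset.range (j + 1), r ^ (j - i) ≤ 1 / (1 - r) := by
  have : ∑ i ∈ Finset.range (j + 1), r ^ (j - i)
      = ∑ i ∈ Finset.range (j + 1), r ^ i := by
    rw [← Finset.sum_range_reflect (fun i => r ^ i) (j + 1)]
    apply Finset.sum_congr rfl
    intro i _
    congr 1
  rw [this]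
  exact geo_sum_le r h0 h1 (j + 1)

lemma abstract (r b A E0 : ℝ) (hr0 : 0 < r) (hr1 : r < 1) (hA : 1 ≤ A)
    (hb : A + 2 * A / (1 - r) ≤ b)
    (D E : ℕ → ℝ) (hD : ∀ i, 0 ≤ D i) (hE0 : 0 ≤ E0) (N : ℕ)
    (hkey : ∀ j ≤ N, E j ≤ A * (∑ i ∈ Finset.range (j + 1), (r * r) ^ (j - i) * D i)
      + A * (r * r) ^ j * E0)
    (nd : ∀ j ≤ N, b * D j < E j) :
    (∀ j ≤ N, D j ≤ r ^ j * E0) ∧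
    ∑ j ∈ Finset.range (N + 1), (E j) ^ 2
      ≤ (2 * A / (1 - r)) ^ 2 * (1 / (1 - r * r)) * E0 ^ 2 := by
  have h1r : 0 < 1 - r := by linarith
  set K : ℝ := 2 * A / (1 - r) with hKdef
  have hK0 : 0 < K := by positivity
  have hAK : A / (1 - r) + A ≤ K := by
    rw [hKdef]
    have hle : A ≤ A / (1 - r) := by
      rw [le_div_iff₀ h1r]; nlinarith
    have : 2 * A / (1 - r) = A / (1 - r) + A / (1 - r) := by ring
    linarith
  -- termwise bound, valid for i ≤ j
  have hterm : ∀ j i : ℕ, i ≤ j → (r * r) ^ (j - i) * r ^ i ≤ r ^ j * r ^ (j - i) := by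
    intro j i hij
    have e : (r * r) ^ (j - i) * r ^ i = r ^ (2 * (j - i) + i) := by
      rw [← pow_two, ← pow_mul, ← pow_add]
    have e2 : r ^ j * r ^ (j - i) = r ^ (j + (j - i)) := by rw [← pow_add]
    rw [e, e2]
    have : 2 * (j - i) + i = j + (j - i) := by omega
    rw [this]
  -- the main inductive estimate
  have main : ∀ j, j ≤ N → D j ≤ r ^ j * E0 := by
    intro j
    induction j using Nat.strong_induction_on with
    | _ j ih =>
      intro hjN
      have hsum : ∑ i ∈ Finset.range j, (r * r) ^ (j - i) * D i
          ≤ (1 / (1 - r)) * (r ^ j * E0) := by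
        calc ∑ i ∈ Finset.range j, (r * r) ^ (j - i) * D i
            ≤ ∑ i ∈ Finset.range j, r ^ j * r ^ (j - i) * E0 := by
              apply Finset.sum_le_sum
              intro i hi
              have hij : i < j := Finset.mem_range.mp hi
              have hDi : D i ≤ r ^ i * E0 := ih i hij (by omega)
              have h1 : (r * r) ^ (j - i) * D i ≤ (r * r) ^ (j - i) * (r ^ i * E0) :=
                mul_le_mul_of_nonneg_left hDi (by positivity)
              have h2 : (r * r) ^ (j - i) * (r ^ i * E0)
                  = ((r * r) ^ (j - i) * r ^ i) * E0 := by ring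
              have h3 := mul_le_mul_of_nonneg_right (hterm j i hij.le) hE0
              linarith
          _ = (∑ i ∈ Finset.range j, r ^ (j - i)) * (r ^ j * E0) := by
              rw [Finset.sum_mul]; apply Finset.sum_congr rfl; intro i _; ring
          _ ≤ (1 / (1 - r)) * (r ^ j * E0) := by
              apply mul_le_mul_of_nonneg_right _ (by positivity)
              calc ∑ i ∈ Finset.range j, r ^ (j - i)
                  ≤ ∑ i ∈ Finset.range (j + 1), r ^ (j - i) := by
                    apply Finset.sum_le_sum_of_subset_of_nonneg
                      (Finset.range_subset_range.mpr (by omega))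
                    intro i _ _; positivity
                _ ≤ 1 / (1 - r) := sum_reflect_pow r hr0.le hr1 j
      have hlast : (r * r) ^ j * E0 ≤ r ^ j * E0 := by
        apply mul_le_mul_of_nonneg_right _ hE0
        exact pow_le_pow_left₀ (by positivity) (by nlinarith) j
      have hkj := hkey j hjN
      rw [Finset.sum_range_succ] at hkj
      have hjj : (r * r) ^ (j - j) * D j = D j := by simp
      rw [hjj] at hkj
      -- E j ≤ A * (sum + D j) + A * (r*r)^j * E0
      have hEj : E j ≤ A * D j + K * (r ^ j * E0) := by
        have hArr : A * ((r * r) ^ j * E0) ≤ A * (r ^ j * E0) :=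
          mul_le_mul_of_nonneg_left hlast (by linarith)
        have hAsum : A * (∑ i ∈ Finset.range j, (r * r) ^ (j - i) * D i)
            ≤ A * ((1 / (1 - r)) * (r ^ j * E0)) :=
          mul_le_mul_of_nonneg_left hsum (by linarith)
        have hKsum : A * ((1 / (1 - r)) * (r ^ j * E0)) + A * (r ^ j * E0)
            ≤ K * (r ^ j * E0) := by
          have h0 : 0 ≤ r ^ j * E0 := by positivity
          have := mul_le_mul_of_nonneg_right hAK h0
          calc A * ((1 / (1 - r)) * (r ^ j * E0)) + A * (r ^ j * E0)
              = (A / (1 - r) + A) * (r ^ j * E0) := by ring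
            _ ≤ K * (r ^ j * E0) := this
        nlinarith [hkj]
      have hnd := nd j hjN
      -- (b - A) * D j ≤ K * (r^j * E0) and K ≤ b - A
      have hbA : K ≤ b - A := by linarith
      have hfin : K * D j ≤ K * (r ^ j * E0) := by nlinarith [hD j]
      exact le_of_mul_le_mul_left hfin hK0
  constructor
  · exact main
  · have hEb : ∀ j ≤ N, E j ≤ K * (r ^ j * E0) := by
      intro j hjN
      have hsum : ∑ i ∈ Finset.range (j + 1), (r * r) ^ (j - i) * D i
          ≤ (1 / (1 - r)) * (r ^ j * E0) := by
        calc ∑ i ∈ Finset.range (j + 1), (r * r) ^ (j - i) * D i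
            ≤ ∑ i ∈ Finset.range (j + 1), r ^ j * r ^ (j - i) * E0 := by
              apply Finset.sum_le_sum
              intro i hi
              have hij : i ≤ j := by
                have := Finset.mem_range.mp hi; omega
              have hDi : D i ≤ r ^ i * E0 := main i (by omega)
              have h1 : (r * r) ^ (j - i) * D i ≤ (r * r) ^ (j - i) * (r ^ i * E0) :=
                mul_le_mul_of_nonneg_left hDi (by positivity)
              have h3 := mul_le_mul_of_nonneg_right (hterm j i hij) hE0
              nlinarith
          _ = (∑ i ∈ Finset.range (j + 1), r ^ (j - i)) * (r ^ j * E0) := by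
              rw [Finset.sum_mul]; apply Finset.sum_congr rfl; intro i _; ring
          _ ≤ (1 / (1 - r)) * (r ^ j * E0) := by
              apply mul_le_mul_of_nonneg_right _ (by positivity)
              exact sum_reflect_pow r hr0.le hr1 j
      have hlast : (r * r) ^ j * E0 ≤ r ^ j * E0 := by
        apply mul_le_mul_of_nonneg_right _ hE0
        exact pow_le_pow_left₀ (by positivity) (by nlinarith) j
      have hkj := hkey j hjN
      have hKsum : A * ((1 / (1 - r)) * (r ^ j * E0)) + A * (r ^ j * E0)
          ≤ K * (r ^ j * E0) := by
        have h0 : 0 ≤ r ^ j * E0 := by positivity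
        have := mul_le_mul_of_nonneg_right hAK h0
        calc A * ((1 / (1 - r)) * (r ^ j * E0)) + A * (r ^ j * E0)
            = (A / (1 - r) + A) * (r ^ j * E0) := by ring
          _ ≤ K * (r ^ j * E0) := this
      nlinarith [mul_le_mul_of_nonneg_left hsum (by linarith : (0:ℝ) ≤ A),
        mul_le_mul_of_nonneg_left hlast (by linarith : (0:ℝ) ≤ A)]
    have hEnn : ∀ j ≤ N, 0 ≤ E j := by
      intro j hjN
      have := nd j hjN
      have hb0 : 0 < b :=
        lt_of_lt_of_le (by positivity : (0:ℝ) < A + 2 * A / (1 - r)) hb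
      nlinarith [hD j]
    have hrr1 : r * r < 1 := by nlinarith
    calc ∑ j ∈ Finset.range (N + 1), (E j) ^ 2
        ≤ ∑ j ∈ Finset.range (N + 1), K ^ 2 * E0 ^ 2 * (r * r) ^ j := by
          apply Finset.sum_le_sum
          intro j hj
          have hjN : j ≤ N := by have := Finset.mem_range.mp hj; omega
          have h1 : (E j) ^ 2 ≤ (K * (r ^ j * E0)) ^ 2 := by
            apply pow_le_pow_left₀ (hEnn j hjN) (hEb j hjN)
          have hpw : (r ^ j) ^ 2 = (r * r) ^ j := by
            rw [← pow_mul, mul_comm, pow_mul, pow_two]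
          calc (E j) ^ 2 ≤ (K * (r ^ j * E0)) ^ 2 := h1
            _ = K ^ 2 * E0 ^ 2 * (r * r) ^ j := by rw [← hpw]; ring
      _ = K ^ 2 * E0 ^ 2 * ∑ j ∈ Finset.range (N + 1), (r * r) ^ j := by
          rw [Finset.mul_sum]
      _ ≤ K ^ 2 * E0 ^ 2 * (1 / (1 - r * r)) := by
          apply mul_le_mul_of_nonneg_left
            (geo_sum_le (r * r) (by positivity) hrr1 (N + 1)) (by positivity)
      _ = K ^ 2 * (1 / (1 - r * r)) * E0 ^ 2 := by ring

lemma rad_eq (t : ℝ) (j k : ℕ) (hkj : k ≤ j) :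
    (2:ℝ) ^ k * ((2:ℝ) ^ (-(j:ℝ)) * t) = (2:ℝ) ^ (-(((j - k : ℕ)):ℝ)) * t := by
  rw [← Real.rpow_natCast 2 k, ← mul_assoc, ← Real.rpow_add (by norm_num : (0:ℝ) < 2)]
  have h : (k:ℝ) + -(j:ℝ) = -(((j - k : ℕ)):ℝ) := by
    rw [Nat.cast_sub hkj]; ring
  rw [h]

lemma rad_eq0 (t : ℝ) (j : ℕ) : (2:ℝ) ^ j * ((2:ℝ) ^ (-(j:ℝ)) * t) = t := by
  rw [← Real.rpow_natCast 2 j, ← mul_assoc, ← Real.rpow_add (by norm_num : (0:ℝ) < 2)]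
  simp


/-- For a finite Borel measure `μ` on `ℂ` and `a > 0`, there exists
`b₀ > 0` depending only on `a` such that for every `b ≥ b₀`: if none of the balls
`B(x, 2^{-j} t)`, `0 ≤ j ≤ N`, is `(h_a,b)`-doubling, then
`μ(B(x,2^{-j}t))/(2^{-j}t) ≤ 2^{-aj/2} ε_{μ,a}(x,t)` for `0 ≤ j ≤ N`, and moreover
`∑_{j=0}^N ε_{μ,a}(x,2^{-j}t)² ≤ C ε_{μ,a}(x,t)²` with `C = C(a,b)` independent of `N`. -/
theorem stmt9 (a : ℝ) (ha : 0 < a) :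
    ∃ b₀ : ℝ, 0 < b₀ ∧ ∀ b : ℝ, b₀ ≤ b →
      ∃ C : ℝ, 0 < C ∧ ∀ (μ : Measure ℂ), IsFiniteMeasure μ →
        ∀ (x : ℂ) (t : ℝ) (N : ℕ), 0 < t →
          (∀ j : ℕ, j ≤ N →
            b * (μ (Metric.closedBall x ((2 : ℝ) ^ (-(j : ℝ)) * t))).toReal /
                ((2 : ℝ) ^ (-(j : ℝ)) * t)
              < epsMu μ a x ((2 : ℝ) ^ (-(j : ℝ)) * t)) →
          (∀ j : ℕ, j ≤ N →
            (μ (Metric.closedBall x ((2 : ℝ) ^ (-(j : ℝ)) * t))).toReal /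
                ((2 : ℝ) ^ (-(j : ℝ)) * t)
              ≤ (2 : ℝ) ^ (-(a * (j : ℝ)) / 2) * epsMu μ a x t) ∧
          ∑ j ∈ Finset.range (N + 1), epsMu μ a x ((2 : ℝ) ^ (-(j : ℝ)) * t) ^ 2
            ≤ C * epsMu μ a x t ^ 2 := by
  set r : ℝ := (2:ℝ) ^ (-(a / 2)) with hrdef
  set A : ℝ := (2:ℝ) ^ (1 + a) with hAdef
  have hr0 : 0 < r := Real.rpow_pos_of_pos (by norm_num) _
  have hr1 : r < 1 := by
    apply Real.rpow_lt_one_of_one_lt_of_neg (by norm_num)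
    linarith
  have hA1 : 1 ≤ A := one_le_A a ha
  have h1r : 0 < 1 - r := by linarith
  have hrr1 : r * r < 1 := by nlinarith
  have hp_rr : (2:ℝ) ^ (-a) = r * r := by
    rw [hrdef, ← Real.rpow_add (by norm_num : (0:ℝ) < 2)]
    congr 1; ring
  have hq2 : 0 < 2 * A / (1 - r) := div_pos (by linarith) h1r
  refine ⟨A + 2 * A / (1 - r), by linarith, ?_⟩
  intro b hb
  refine ⟨(2 * A / (1 - r)) ^ 2 * (1 / (1 - r * r)),
    mul_pos (pow_pos hq2 2) (one_div_pos.mpr (by linarith)), ?_⟩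
  intro μ hμfin x t N ht hnd
  haveI := hμfin
  set Dd : ℕ → ℝ := fun i =>
    (μ (closedBall x ((2:ℝ) ^ (-(i:ℝ)) * t))).toReal / ((2:ℝ) ^ (-(i:ℝ)) * t) with hDdef
  set Ee : ℕ → ℝ := fun j => epsMu μ a x ((2:ℝ) ^ (-(j:ℝ)) * t) with hEdef
  have hs : ∀ j : ℕ, 0 < (2:ℝ) ^ (-(j:ℝ)) * t := by
    intro j
    have : (0:ℝ) < (2:ℝ) ^ (-(j:ℝ)) := Real.rpow_pos_of_pos (by norm_num) _
    positivity
  have hDnn : ∀ i, 0 ≤ Dd i := by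
    intro i
    exact div_nonneg ENNReal.toReal_nonneg (hs i).le
  have hE0 : 0 ≤ epsMu μ a x t := epsMu_nonneg μ a x ht.le
  have hkeyA : ∀ j, j ≤ N → Ee j ≤
      A * (∑ i ∈ Finset.range (j + 1), (r * r) ^ (j - i) * Dd i)
      + A * (r * r) ^ j * epsMu μ a x t := by
    intro j _
    have hk := key a ha μ x (hs j) j
    rw [rad_eq0 t j] at hk
    have hsum_eq : ∑ k ∈ Finset.range (j + 1), ((2:ℝ) ^ (-a)) ^ k *
          ((μ (closedBall x ((2:ℝ) ^ k * ((2:ℝ) ^ (-(j:ℝ)) * t)))).toReal /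
            ((2:ℝ) ^ k * ((2:ℝ) ^ (-(j:ℝ)) * t)))
        = ∑ i ∈ Finset.range (j + 1), (r * r) ^ (j - i) * Dd i := by
      have step1 : ∑ k ∈ Finset.range (j + 1), ((2:ℝ) ^ (-a)) ^ k *
            ((μ (closedBall x ((2:ℝ) ^ k * ((2:ℝ) ^ (-(j:ℝ)) * t)))).toReal /
              ((2:ℝ) ^ k * ((2:ℝ) ^ (-(j:ℝ)) * t)))
          = ∑ k ∈ Finset.range (j + 1), (r * r) ^ k * Dd (j - k) := by
        apply Finset.sum_congr rfl
        intro k hk'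
        have hkj : k ≤ j := by have := Finset.mem_range.mp hk'; omega
        rw [rad_eq t j k hkj, hp_rr, hDdef]
      rw [step1, ← Finset.sum_range_reflect (fun k => (r * r) ^ k * Dd (j - k)) (j + 1)]
      apply Finset.sum_congr rfl
      intro i hi
      have hij : i ≤ j := by have := Finset.mem_range.mp hi; omega
      have e1 : j + 1 - 1 - i = j - i := by omega
      have e2 : j - (j - i) = i := by omega
      rw [e1, e2]
    rw [hsum_eq, hp_rr] at hk
    exact hk
  have hndA : ∀ j, j ≤ N → b * Dd j < Ee j := by
    intro j hjN
    have := hnd j hjN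
    rw [hDdef]
    calc b * ((μ (closedBall x ((2:ℝ) ^ (-(j:ℝ)) * t))).toReal / ((2:ℝ) ^ (-(j:ℝ)) * t))
        = b * (μ (closedBall x ((2:ℝ) ^ (-(j:ℝ)) * t))).toReal / ((2:ℝ) ^ (-(j:ℝ)) * t) := by
          ring
      _ < Ee j := this
  obtain ⟨hpart1, hpart2⟩ := abstract r b A (epsMu μ a x t) hr0 hr1 hA1 hb
    Dd Ee hDnn hE0 N hkeyA hndA
  constructor
  · intro j hjN
    have hrj : (2:ℝ) ^ (-(a * (j:ℝ)) / 2) = r ^ j := by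
      rw [hrdef, ← Real.rpow_natCast ((2:ℝ) ^ (-(a/2))) j,
        ← Real.rpow_mul (by norm_num : (0:ℝ) ≤ 2)]
      congr 1; ring
    rw [hrj]
    exact hpart1 j hjN
  · exact hpart2
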